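/- arXiv:2104.14256 — 2 statements merged into one kernel-verified Lean document; each statement's English description precedes it below -/
import Mathlib

section
/- (Integral Flow Theorem for circulations) Let G be a finite directed graph with integer lower bounds l(e) and integer upper bounds u(e) on each edge, l(e) ≤ u(e). If there exists a real-valued feasible circulation f (i.e., l(e) ≤ f(e) ≤ u(e) for every edge and flow conservation holds at every node), then there exists an integer-valued feasible circulation. -/
open Finset

namespace IntFlow
set_option linter.unusedSectionVars false

variable {V E : Type} [Fintype V] [Fintype E] [DecidableEq V]

noncomputable def Frac (f : E → ℝ) : Finset E :=
  @Finset.filter E (fun e => ¬ ∃ k : ℤ, f e = (k : ℝ)) (Classical.decPred _) univ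

lemma mem_Frac {f : E → ℝ} {e : E} : e ∈ Frac f ↔ ¬ ∃ k : ℤ, f e = (k : ℝ) := by
  simp [Frac]

lemma not_mem_Frac {f : E → ℝ} {e : E} (h : e ∉ Frac f) : ∃ k : ℤ, f e = (k : ℝ) := by
  by_contra hc; exact h (mem_Frac.mpr hc)

lemma deg_ne_one (src tgt : E → V) (f : E → ℝ)
    (hcons : ∀ v : V,
      ∑ e ∈ univ.filter (fun e => tgt e = v), f e =
      ∑ e ∈ univ.filter (fun e => src e = v), f e) (v : V) :
    ((Frac f).filter (fun e => tgt e = v)).card +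
    ((Frac f).filter (fun e => src e = v)).card ≠ 1 := by
  classical
  intro h
  set S : AddSubgroup ℝ := (Int.castAddHom ℝ).range with hS
  have hmemS : ∀ e, e ∉ Frac f → f e ∈ S := by
    intro e he
    obtain ⟨k, hk⟩ := not_mem_Frac he
    exact ⟨k, hk.symm⟩
  have hsplit : ∀ (g : E → V),
      ∑ e ∈ univ.filter (fun e => g e = v), f e =
      (∑ e ∈ (Frac f).filter (fun e => g e = v), f e) +
      ∑ e ∈ (univ.filter (fun e => g e = v)).filter (fun e => e ∉ Frac f), f e := by
    intro g
    rw [← Finset.sum_filter_add_sum_filter_not (univ.filter (fun e => g e = v))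
      (fun e => e ∈ Frac f) f]
    congr 1
    apply Finset.sum_congr _ (fun _ _ => rfl)
    ext e; simp [mem_Frac, and_comm]
  have hIin : ∑ e ∈ (univ.filter (fun e => tgt e = v)).filter (fun e => e ∉ Frac f), f e ∈ S :=
    AddSubgroup.sum_mem S (fun e he => hmemS e (Finset.mem_filter.mp he).2)
  have hIout : ∑ e ∈ (univ.filter (fun e => src e = v)).filter (fun e => e ∉ Frac f), f e ∈ S :=
    AddSubgroup.sum_mem S (fun e he => hmemS e (Finset.mem_filter.mp he).2)
  have key := hcons v
  rw [hsplit tgt, hsplit src] at key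
  rcases Nat.add_eq_one_iff.mp h with ⟨h0, h1⟩ | ⟨h1, h0⟩
  · obtain ⟨e₀, he₀⟩ := Finset.card_eq_one.mp h1
    rw [Finset.card_eq_zero.mp h0, he₀] at key
    simp only [Finset.sum_singleton, Finset.sum_empty, zero_add] at key
    have he₀F : e₀ ∈ Frac f := (Finset.mem_filter.mp (he₀ ▸ Finset.mem_singleton_self e₀)).1
    have hfS : f e₀ ∈ S := by
      have heq : f e₀ =
          (∑ e ∈ (univ.filter (fun e => tgt e = v)).filter (fun e => e ∉ Frac f), f e) -
          ∑ e ∈ (univ.filter (fun e => src e = v)).filter (fun e => e ∉ Frac f), f e := by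
        linarith [key]
      rw [heq]; exact S.sub_mem hIin hIout
    obtain ⟨k, hk⟩ := hfS
    exact (mem_Frac.mp he₀F) ⟨k, hk.symm⟩
  · obtain ⟨e₀, he₀⟩ := Finset.card_eq_one.mp h1
    rw [Finset.card_eq_zero.mp h0, he₀] at key
    simp only [Finset.sum_singleton, Finset.sum_empty, zero_add] at key
    have he₀F : e₀ ∈ Frac f := (Finset.mem_filter.mp (he₀ ▸ Finset.mem_singleton_self e₀)).1
    have hfS : f e₀ ∈ S := by
      have heq : f e₀ =
          (∑ e ∈ (univ.filter (fun e => src e = v)).filter (fun e => e ∉ Frac f), f e) -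
          ∑ e ∈ (univ.filter (fun e => tgt e = v)).filter (fun e => e ∉ Frac f), f e := by
        linarith [key]
      rw [heq]; exact S.sub_mem hIout hIin
    obtain ⟨k, hk⟩ := hfS
    exact (mem_Frac.mp he₀F) ⟨k, hk.symm⟩


/-- existence of a nonzero circulation supported on the fractional edges -/
lemma exists_circulation (src tgt : E → V) (f : E → ℝ)
    (hcons : ∀ v : V,
      ∑ e ∈ univ.filter (fun e => tgt e = v), f e =
      ∑ e ∈ univ.filter (fun e => src e = v), f e)
    (hne : (Frac f).Nonempty) :
    ∃ d : E → ℝ, d ≠ 0 ∧ (∀ e, e ∉ Frac f → d e = 0) ∧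
      ∀ v : V,
        ∑ e ∈ univ.filter (fun e => tgt e = v), d e =
        ∑ e ∈ univ.filter (fun e => src e = v), d e := by
  classical
  obtain ⟨e₀, he₀⟩ := hne
  -- connectivity relation generated by fractional edges
  set r : V → V → Prop := fun a b => ∃ e ∈ Frac f,
    (src e = a ∧ tgt e = b) ∨ (src e = b ∧ tgt e = a) with hr
  set R : V → V → Prop := Relation.ReflTransGen r with hRdef
  set v₀ : V := src e₀ with hv₀
  set C : Finset V := univ.filter (fun v => R v₀ v) with hC
  set F' : Finset E := (Frac f).filter (fun e => R v₀ (src e)) with hF'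
  have hrsymm : ∀ a b, r a b → r b a := by
    rintro a b ⟨e, he, h | h⟩
    exacts [⟨e, he, Or.inr h⟩, ⟨e, he, Or.inl h⟩]
  have hmemC : ∀ v, v ∈ C ↔ R v₀ v := by intro v; simp [hC]
  have hmemF' : ∀ e, e ∈ F' ↔ e ∈ Frac f ∧ R v₀ (src e) := by intro e; simp [hF']
  -- endpoints of F' edges lie in C
  have hsrcC : ∀ e ∈ F', src e ∈ C := fun e he => (hmemC _).mpr ((hmemF' e).mp he).2
  have htgtC : ∀ e ∈ F', tgt e ∈ C := by
    intro e he
    obtain ⟨heF, hR⟩ := (hmemF' e).mp he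
    exact (hmemC _).mpr (hR.tail ⟨e, heF, Or.inl ⟨rfl, rfl⟩⟩)
  -- fractional edges with an endpoint in C are in F'
  have hF'of : ∀ e ∈ Frac f, (src e ∈ C ∨ tgt e ∈ C) → e ∈ F' := by
    rintro e he (h | h)
    · exact (hmemF' e).mpr ⟨he, (hmemC _).mp h⟩
    · exact (hmemF' e).mpr ⟨he, ((hmemC _).mp h).tail ⟨e, he, Or.inr ⟨rfl, rfl⟩⟩⟩
  -- every C-vertex is incident to an F' edge
  have hinc : ∀ v ∈ C, ∃ e ∈ F', src e = v ∨ tgt e = v := by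
    intro v hv
    rcases Relation.ReflTransGen.cases_tail ((hmemC v).mp hv) with heq | ⟨b, hb, hrbv⟩
    · exact ⟨e₀, hF'of e₀ he₀ (Or.inl ((hmemC _).mpr Relation.ReflTransGen.refl)),
        Or.inl heq.symm⟩
    · obtain ⟨e, heF, h | h⟩ := hrbv
      · exact ⟨e, hF'of e heF (Or.inr (h.2 ▸ hv)), Or.inr h.2⟩
      · exact ⟨e, hF'of e heF (Or.inl (h.1 ▸ hv)), Or.inl h.1⟩
  -- filters of F' at a C-vertex agree with filters of Frac f
  have hfilter_eq : ∀ v ∈ C, ∀ (g : E → V), (∀ e ∈ Frac f, g e = v → e ∈ F') →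
      (F'.filter (fun e => g e = v)) = (Frac f).filter (fun e => g e = v) := by
    intro v hv g hg
    ext e
    simp only [Finset.mem_filter]
    constructor
    · rintro ⟨heF', hge⟩; exact ⟨((hmemF' e).mp heF').1, hge⟩
    · rintro ⟨heF, hge⟩; exact ⟨hg e heF hge, hge⟩
  -- degree bound
  have hdeg : ∀ v ∈ C,
      2 ≤ (F'.filter (fun e => tgt e = v)).card + (F'.filter (fun e => src e = v)).card := by
    intro v hv
    have h1 : (F'.filter (fun e => tgt e = v)) = (Frac f).filter (fun e => tgt e = v) :=
      hfilter_eq v hv tgt (fun e he hge => hF'of e he (Or.inr (hge ▸ hv)))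
    have h2 : (F'.filter (fun e => src e = v)) = (Frac f).filter (fun e => src e = v) :=
      hfilter_eq v hv src (fun e he hge => hF'of e he (Or.inl (hge ▸ hv)))
    rw [h1, h2]
    have hne1 := deg_ne_one src tgt f hcons v
    obtain ⟨e, heF', hor⟩ := hinc v hv
    have heF : e ∈ Frac f := ((hmemF' e).mp heF').1
    have hpos : 0 < ((Frac f).filter (fun e => tgt e = v)).card +
        ((Frac f).filter (fun e => src e = v)).card := by
      rcases hor with h | h
      · have : e ∈ (Frac f).filter (fun e => src e = v) := Finset.mem_filter.mpr ⟨heF, h⟩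
        have := Finset.card_pos.mpr ⟨e, this⟩
        omega
      · have : e ∈ (Frac f).filter (fun e => tgt e = v) := Finset.mem_filter.mpr ⟨heF, h⟩
        have := Finset.card_pos.mpr ⟨e, this⟩
        omega
    omega
  -- counting: C.card ≤ F'.card
  have hcount : C.card ≤ F'.card := by
    have ht : F'.card = ∑ v ∈ C, (F'.filter (fun e => tgt e = v)).card :=
      Finset.card_eq_sum_card_fiberwise htgtC
    have hs : F'.card = ∑ v ∈ C, (F'.filter (fun e => src e = v)).card :=
      Finset.card_eq_sum_card_fiberwise hsrcC
    have : 2 * C.card ≤ 2 * F'.card := by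
      calc 2 * C.card = ∑ _v ∈ C, 2 := by rw [Finset.sum_const, smul_eq_mul, mul_comm]
        _ ≤ ∑ v ∈ C, ((F'.filter (fun e => tgt e = v)).card +
            (F'.filter (fun e => src e = v)).card) := Finset.sum_le_sum hdeg
        _ = 2 * F'.card := by rw [Finset.sum_add_distrib, ← ht, ← hs]; ring
    omega
  have hv₀C : v₀ ∈ C := (hmemC _).mpr Relation.ReflTransGen.refl
  -- dimension argument
  set β := {v // v ∈ C.erase v₀} with hβ
  set α := {e // e ∈ F'} with hα
  set M : Matrix β α ℝ := fun w ε =>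
    (if tgt ε.1 = w.1 then (1:ℝ) else 0) - (if src ε.1 = w.1 then (1:ℝ) else 0) with hM
  have hcard : Fintype.card β < Fintype.card α := by
    have h1 : Fintype.card α = F'.card := Fintype.card_coe _
    have h2 : Fintype.card β = (C.erase v₀).card := Fintype.card_coe _
    have h3 : (C.erase v₀).card = C.card - 1 := Finset.card_erase_of_mem hv₀C
    have h4 : 0 < C.card := Finset.card_pos.mpr ⟨v₀, hv₀C⟩
    omega
  have hnotinj : ¬ Function.Injective M.mulVecLin := by
    intro hinj
    have := LinearMap.finrank_le_finrank_of_injective hinj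
    rw [Module.finrank_fintype_fun_eq_card, Module.finrank_fintype_fun_eq_card] at this
    omega
  obtain ⟨x, y, hxy, hne'⟩ : ∃ x y, M.mulVecLin x = M.mulVecLin y ∧ x ≠ y := by
    simp only [Function.Injective, not_forall] at hnotinj
    obtain ⟨x, y, h1, h2⟩ := hnotinj
    exact ⟨x, y, h1, h2⟩
  set c : α → ℝ := x - y with hc
  have hcne : c ≠ 0 := sub_ne_zero.mpr hne'
  have hMc : M.mulVec c = 0 := by
    have : M.mulVecLin c = 0 := by rw [hc, map_sub, hxy, sub_self]
    exact this
  -- the circulation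
  set d : E → ℝ := fun e => if h : e ∈ F' then c ⟨e, h⟩ else 0 with hd
  have hdF' : ∀ e, e ∉ F' → d e = 0 := by intro e he; simp [hd, he]
  have hdval : ∀ (ε : α), d ε.1 = c ε := by
    rintro ⟨e, he⟩; simp [hd, he]
  refine ⟨d, ?_, ?_, ?_⟩
  · intro h0
    apply hcne
    funext ε
    have h := congrFun h0 ε.1
    rw [hdval ε] at h
    exact h
  · intro e he
    exact hdF' e (fun hF'mem => he ((hmemF' e).mp hF'mem).1)
  · -- conservation
    have hA : ∀ (p : E → V) (v : V),
        ∑ e ∈ univ.filter (fun e => p e = v), d e =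
        ∑ ε : α, (if p ε.1 = v then c ε else 0) := by
      intro p v
      rw [Finset.sum_filter]
      rw [← Finset.sum_subset (Finset.subset_univ F')
        (by intro e _ he; by_cases h : p e = v <;> simp [h, hdF' e he])]
      rw [← Finset.sum_attach F' (fun e => if p e = v then d e else 0),
        Finset.univ_eq_attach]
      exact Finset.sum_congr rfl (fun ε _ => by rw [hdval ε])
    have hB : ∀ v, v ∈ C.erase v₀ →
        (∑ ε : α, (if tgt ε.1 = v then c ε else 0)) =
        (∑ ε : α, (if src ε.1 = v then c ε else 0)) := by
      intro v hv
      have h := congrFun hMc ⟨v, hv⟩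
      simp only [Matrix.mulVec, dotProduct, hM, Pi.zero_apply] at h
      have h2 : ∑ ε : α, ((if tgt ε.1 = v then c ε else 0) -
          (if src ε.1 = v then c ε else 0)) = 0 := by
        refine Eq.trans (Finset.sum_congr rfl fun ε _ => ?_) h
        split_ifs <;> ring
      rw [Finset.sum_sub_distrib] at h2
      linarith
    have hC0 : ∀ (p : E → V),
        ∑ v : V, ∑ ε : α, (if p ε.1 = v then c ε else 0) = ∑ ε : α, c ε := by
      intro p
      rw [Finset.sum_comm]
      exact Finset.sum_congr rfl (fun ε _ => by simp)
    set gfun : V → ℝ := fun v =>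
      (∑ ε : α, (if tgt ε.1 = v then c ε else 0)) -
      (∑ ε : α, (if src ε.1 = v then c ε else 0)) with hgfun
    have hgzero : ∀ w, w ≠ v₀ → gfun w = 0 := by
      intro w hw
      by_cases hwC : w ∈ C
      · have := hB w (Finset.mem_erase.mpr ⟨hw, hwC⟩)
        simp only [hgfun]
        linarith
      · simp only [hgfun]
        have e1 : (∑ ε : α, (if tgt ε.1 = w then c ε else 0)) = 0 :=
          Finset.sum_eq_zero (fun ε _ => by
            have htc : tgt ε.1 ∈ C := htgtC ε.1 ε.2
            rw [if_neg (show ¬ tgt ε.1 = w from fun h => hwC (h ▸ htc))])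
        have e2 : (∑ ε : α, (if src ε.1 = w then c ε else 0)) = 0 :=
          Finset.sum_eq_zero (fun ε _ => by
            have hsc : src ε.1 ∈ C := hsrcC ε.1 ε.2
            rw [if_neg (show ¬ src ε.1 = w from fun h => hwC (h ▸ hsc))])
        rw [e1, e2, sub_zero]
    have hgsum : ∑ w : V, gfun w = 0 := by
      simp only [hgfun]
      rw [Finset.sum_sub_distrib, hC0 tgt, hC0 src, sub_self]
    have hgv₀ : gfun v₀ = 0 := by
      have h1 : gfun v₀ + ∑ w ∈ univ.erase v₀, gfun w = ∑ w : V, gfun w :=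
        Finset.add_sum_erase univ gfun (Finset.mem_univ v₀)
      have h2 : ∑ w ∈ univ.erase v₀, gfun w = 0 :=
        Finset.sum_eq_zero (fun w hw => hgzero w (Finset.mem_erase.mp hw).1)
      rw [h2, hgsum] at h1
      linarith
    intro v
    have hgv : gfun v = 0 := by
      by_cases hv : v = v₀
      · rw [hv]; exact hgv₀
      · exact hgzero v hv
    rw [hA tgt v, hA src v]
    simp only [hgfun] at hgv
    linarith


/-- augmentation step: strictly reduce the number of fractional edges -/
lemma step (src tgt : E → V) (l u : E → ℤ) (f : E → ℝ)
    (hb : ∀ e, (l e : ℝ) ≤ f e ∧ f e ≤ (u e : ℝ))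
    (hcons : ∀ v : V,
      ∑ e ∈ univ.filter (fun e => tgt e = v), f e =
      ∑ e ∈ univ.filter (fun e => src e = v), f e)
    (hne : (Frac f).Nonempty) :
    ∃ f' : E → ℝ, (∀ e, (l e : ℝ) ≤ f' e ∧ f' e ≤ (u e : ℝ)) ∧
      (∀ v : V,
        ∑ e ∈ univ.filter (fun e => tgt e = v), f' e =
        ∑ e ∈ univ.filter (fun e => src e = v), f' e) ∧
      (Frac f').card < (Frac f).card := by
  classical
  obtain ⟨d, hdne, hdsupp, hdcons⟩ := exists_circulation src tgt f hcons hne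
  -- fractional edges have strict floor/ceil gaps
  have hfrac : ∀ e ∈ Frac f, (⌊f e⌋ : ℝ) < f e ∧ f e < (⌈f e⌉ : ℝ) := by
    intro e he
    have h1 : (⌊f e⌋ : ℝ) ≤ f e := Int.floor_le _
    have h2 : f e ≤ (⌈f e⌉ : ℝ) := Int.le_ceil _
    have h3 : f e ≠ (⌊f e⌋ : ℝ) := fun h => (mem_Frac.mp he) ⟨⌊f e⌋, h⟩
    have h4 : f e ≠ (⌈f e⌉ : ℝ) := fun h => (mem_Frac.mp he) ⟨⌈f e⌉, h⟩
    exact ⟨lt_of_le_of_ne h1 (Ne.symm h3), lt_of_le_of_ne h2 h4⟩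
  set T : Finset E := (Frac f).filter (fun e => d e ≠ 0) with hT
  have hTne : T.Nonempty := by
    obtain ⟨e, he⟩ : ∃ e, d e ≠ 0 := by
      by_contra hc
      push_neg at hc
      exact hdne (funext hc)
    have heF : e ∈ Frac f := by
      by_contra hc; exact he (hdsupp e hc)
    exact ⟨e, Finset.mem_filter.mpr ⟨heF, he⟩⟩
  set room : E → ℝ := fun e =>
    if 0 < d e then ((⌈f e⌉ : ℝ) - f e) / d e else (f e - (⌊f e⌋ : ℝ)) / (-(d e)) with hroom
  have hroom_pos : ∀ e ∈ T, 0 < room e := by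
    intro e he
    obtain ⟨heF, hde⟩ := Finset.mem_filter.mp he
    obtain ⟨hfl, hce⟩ := hfrac e heF
    by_cases hpos : 0 < d e
    · simp only [hroom, if_pos hpos]
      exact div_pos (by linarith) hpos
    · have hneg : d e < 0 := lt_of_le_of_ne (not_lt.mp hpos) hde
      simp only [hroom, if_neg hpos]
      exact div_pos (by linarith) (by linarith)
  obtain ⟨e₁, he₁T, he₁min⟩ := Finset.exists_min_image T room hTne
  set t : ℝ := room e₁ with ht
  have htpos : 0 < t := hroom_pos e₁ he₁T
  set f' : E → ℝ := fun e => f e + t * d e with hf'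
  -- key bounds for edges where d ≠ 0
  have hbound' : ∀ e ∈ T, (⌊f e⌋ : ℝ) ≤ f' e ∧ f' e ≤ (⌈f e⌉ : ℝ) := by
    intro e he
    obtain ⟨heF, hde⟩ := Finset.mem_filter.mp he
    obtain ⟨hfl, hce⟩ := hfrac e heF
    have hmin := he₁min e he
    by_cases hpos : 0 < d e
    · have hr : room e = ((⌈f e⌉ : ℝ) - f e) / d e := by simp only [hroom, if_pos hpos]
      have : t * d e ≤ (⌈f e⌉ : ℝ) - f e := by
        rw [hr] at hmin
        calc t * d e ≤ (((⌈f e⌉ : ℝ) - f e) / d e) * d e :=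
          mul_le_mul_of_nonneg_right hmin (le_of_lt hpos)
        _ = (⌈f e⌉ : ℝ) - f e := div_mul_cancel₀ _ (ne_of_gt hpos)
      constructor
      · simp only [hf']
        nlinarith
      · simp only [hf']; linarith
    · have hneg : d e < 0 := lt_of_le_of_ne (not_lt.mp hpos) hde
      have hr : room e = (f e - (⌊f e⌋ : ℝ)) / (-(d e)) := by simp only [hroom, if_neg hpos]
      have : t * (-(d e)) ≤ f e - (⌊f e⌋ : ℝ) := by
        rw [hr] at hmin
        calc t * (-(d e)) ≤ ((f e - (⌊f e⌋ : ℝ)) / (-(d e))) * (-(d e)) :=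
          mul_le_mul_of_nonneg_right hmin (by linarith)
        _ = f e - (⌊f e⌋ : ℝ) := div_mul_cancel₀ _ (by linarith)
      constructor
      · simp only [hf']; linarith
      · simp only [hf']; nlinarith
  have hsame : ∀ e, d e = 0 → f' e = f e := by
    intro e h; simp [hf', h]
  have hT' : ∀ e, e ∉ T → d e = 0 := by
    intro e he
    by_contra hc
    exact he (Finset.mem_filter.mpr ⟨by by_contra h2; exact hc (hdsupp e h2), hc⟩)
  refine ⟨f', ?_, ?_, ?_⟩
  · intro e
    by_cases heT : e ∈ T
    · obtain ⟨h1, h2⟩ := hbound' e heT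
      have heF : e ∈ Frac f := (Finset.mem_filter.mp heT).1
      have hl : (l e : ℝ) ≤ (⌊f e⌋ : ℝ) := by
        exact_mod_cast Int.cast_le.mpr (Int.le_floor.mpr (hb e).1)
      have hu : ((⌈f e⌉ : ℝ)) ≤ (u e : ℝ) := by
        exact_mod_cast Int.cast_le.mpr (Int.ceil_le.mpr (hb e).2)
      exact ⟨le_trans hl h1, le_trans h2 hu⟩
    · rw [hsame e (hT' e heT)]; exact hb e
  · intro v
    simp only [hf']
    rw [Finset.sum_add_distrib, Finset.sum_add_distrib, hcons v]
    congr 1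
    rw [← Finset.mul_sum, ← Finset.mul_sum, hdcons v]
  · -- Frac f' ⊂ Frac f
    have hsub : Frac f' ⊆ Frac f := by
      intro e he
      by_contra hc
      have hd0 : d e = 0 := hdsupp e hc
      rw [mem_Frac, hsame e hd0] at he
      exact he (not_mem_Frac hc)
    have he₁F : e₁ ∈ Frac f := (Finset.mem_filter.mp he₁T).1
    have he₁notF' : e₁ ∉ Frac f' := by
      rw [mem_Frac]
      push_neg
      by_contra hc
      push_neg at hc
      obtain ⟨hde₁⟩ := Finset.mem_filter.mp he₁T
      have hde₁' : d e₁ ≠ 0 := (Finset.mem_filter.mp he₁T).2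
      by_cases hpos : 0 < d e₁
      · have hr : t = ((⌈f e₁⌉ : ℝ) - f e₁) / d e₁ := by simp only [ht, hroom, if_pos hpos]
        have h1 : t * d e₁ = (⌈f e₁⌉ : ℝ) - f e₁ := by
          rw [hr]; exact div_mul_cancel₀ _ (ne_of_gt hpos)
        have : f' e₁ = (⌈f e₁⌉ : ℝ) := by
          show f e₁ + t * d e₁ = (⌈f e₁⌉ : ℝ)
          linarith
        exact (hc ⌈f e₁⌉) this
      · have hneg : d e₁ < 0 := lt_of_le_of_ne (not_lt.mp hpos) hde₁'
        have hr : t = (f e₁ - (⌊f e₁⌋ : ℝ)) / (-(d e₁)) := by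
          simp only [ht, hroom, if_neg hpos]
        have h1 : t * (-(d e₁)) = f e₁ - (⌊f e₁⌋ : ℝ) := by
          rw [hr]; exact div_mul_cancel₀ _ (by linarith)
        have h2 : t * d e₁ = -(t * (-(d e₁))) := by ring
        have : f' e₁ = (⌊f e₁⌋ : ℝ) := by
          show f e₁ + t * d e₁ = (⌊f e₁⌋ : ℝ)
          rw [h2, h1]; ring
        exact (hc ⌊f e₁⌋) this
    exact Finset.card_lt_card ⟨hsub, fun hsup => he₁notF' (hsup he₁F)⟩


lemma main (src tgt : E → V) (l u : E → ℤ) :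
    ∀ (n : ℕ) (f : E → ℝ), (Frac f).card ≤ n →
    (∀ e, (l e : ℝ) ≤ f e ∧ f e ≤ (u e : ℝ)) →
    (∀ v : V,
      ∑ e ∈ univ.filter (fun e => tgt e = v), f e =
      ∑ e ∈ univ.filter (fun e => src e = v), f e) →
    ∃ g : E → ℤ, (∀ e, l e ≤ g e ∧ g e ≤ u e) ∧
      ∀ v : V,
        ∑ e ∈ univ.filter (fun e => tgt e = v), g e =
        ∑ e ∈ univ.filter (fun e => src e = v), g e := by
  intro n
  induction n with
  | zero =>
    intro f hcard hb hcons
    have hempty : Frac f = ∅ := Finset.card_eq_zero.mp (Nat.le_zero.mp hcard)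
    have hint : ∀ e, ∃ k : ℤ, f e = (k : ℝ) := by
      intro e
      apply not_mem_Frac
      rw [hempty]
      exact Finset.notMem_empty e
    choose g hg using hint
    refine ⟨g, ?_, ?_⟩
    · intro e
      obtain ⟨h1, h2⟩ := hb e
      rw [hg e] at h1 h2
      exact ⟨by exact_mod_cast h1, by exact_mod_cast h2⟩
    · intro v
      have := hcons v
      have hcast : ∀ (s : Finset E), ((∑ e ∈ s, g e : ℤ) : ℝ) = ∑ e ∈ s, f e := by
        intro s
        push_cast
        exact Finset.sum_congr rfl (fun e _ => (hg e).symm)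
      have : ((∑ e ∈ univ.filter (fun e => tgt e = v), g e : ℤ) : ℝ) =
          ((∑ e ∈ univ.filter (fun e => src e = v), g e : ℤ) : ℝ) := by
        rw [hcast, hcast]; exact hcons v
      exact_mod_cast this
  | succ n ih =>
    intro f hcard hb hcons
    by_cases hne : (Frac f).Nonempty
    · obtain ⟨f', hb', hcons', hlt⟩ := step src tgt l u f hb hcons hne
      exact ih f' (by omega) hb' hcons'
    · rw [Finset.not_nonempty_iff_eq_empty] at hne
      exact ih f (by simp [hne]) hb hcons


end IntFlow

/-- Integral flow theorem for circulations: if a directed graph with integer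
lower and upper edge bounds admits a real feasible circulation, it admits an
integer feasible circulation. -/
theorem stmt3 (V E : Type) [Fintype V] [Fintype E] [DecidableEq V]
    (src tgt : E → V) (l u : E → ℤ) (hlu : ∀ e, l e ≤ u e)
    (f : E → ℝ)
    (hbounds : ∀ e, (l e : ℝ) ≤ f e ∧ f e ≤ (u e : ℝ))
    (hcons : ∀ v : V,
      ∑ e ∈ Finset.univ.filter (fun e => tgt e = v), f e =
      ∑ e ∈ Finset.univ.filter (fun e => src e = v), f e) :
    ∃ g : E → ℤ, (∀ e, l e ≤ g e ∧ g e ≤ u e) ∧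
      ∀ v : V,
        ∑ e ∈ Finset.univ.filter (fun e => tgt e = v), g e =
        ∑ e ∈ Finset.univ.filter (fun e => src e = v), g e :=
  IntFlow.main src tgt l u (IntFlow.Frac f).card f le_rfl hbounds hcons
end

section
/- Let (ũ'_{mn}), (S̃_n), (w_m κ̃), K be nonnegative reals with Σ_n ũ'_{mn} = w_m κ̃ for all m, Σ_m ũ'_{mn} = S̃_n for all n, Σ_n S̃_n = K, and K an integer. Then there exist nonnegative integers (u*_{mn}), (S*_n), (d*_m) with ⌊ũ'_{mn}⌋ ≤ u*_{mn} ≤ ⌈ũ'_{mn}⌉, ⌊S̃_n⌋ ≤ S*_n ≤ ⌈S̃_n⌉, ⌊w_m κ̃⌋ ≤ d*_m ≤ ⌈w_m κ̃⌉, such that Σ_n u*_{mn} = d*_m for all m, Σ_m u*_{mn} = S*_n for all n, and Σ_n S*_n = K. -/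
open Finset

lemma pair_sum (G : ℕ → ℝ) (t : ℕ) : ∀ k : ℕ,
    ∑ s ∈ Finset.Ico t (t + 2*k), G s
      = ∑ j ∈ Finset.range k, (G (t + 2*j) + G (t + 2*j + 1)) := by
  intro k
  induction k with
  | zero => simp
  | succ k ih =>
    have h1 : t + 2*(k+1) = (t + 2*k + 1) + 1 := by ring
    rw [h1, Finset.sum_Ico_succ_top (by omega), Finset.sum_Ico_succ_top (by omega),
      ih, Finset.sum_range_succ]
    ring

lemma sum_int_of_others {α : Type*} [Fintype α] [DecidableEq α] (f : α → ℝ) (z : ℤ)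
    (hz : ∑ x, f x = (z:ℝ)) (a : α) (h : ∀ b, b ≠ a → Int.fract (f b) = 0) :
    Int.fract (f a) = 0 := by
  have h1 : ∑ x, f x = f a + ∑ b ∈ Finset.univ.erase a, f b := by
    rw [Finset.add_sum_erase _ _ (Finset.mem_univ a)]
  have h2 : ∑ b ∈ Finset.univ.erase a, f b = ((∑ b ∈ Finset.univ.erase a, ⌊f b⌋ : ℤ) : ℝ) := by
    push_cast
    refine Finset.sum_congr rfl ?_
    intro b hb
    have := h b (Finset.mem_erase.1 hb).1
    have : f b = ⌊f b⌋ := by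
      have h3 := Int.fract_add_floor (f b)
      rw [this] at h3; linarith
    linarith [this]
  have : f a = ((z - ∑ b ∈ Finset.univ.erase a, ⌊f b⌋ : ℤ) : ℝ) := by
    push_cast
    rw [h1] at hz
    rw [h2] at hz
    push_cast at hz
    linarith
  rw [this, Int.fract_intCast]

noncomputable def fracSet {N : ℕ} (B : Fin N → Fin N → ℝ) : Finset (Fin N × Fin N) :=
  Finset.filter (fun p => Int.fract (B p.1 p.2) ≠ 0) Finset.univ

lemma round_step {N : ℕ} (B : Fin N → Fin N → ℝ)
    (hrow : ∀ m, ∃ z : ℤ, ∑ n, B m n = (z:ℝ))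
    (hcol : ∀ n, ∃ z : ℤ, ∑ m, B m n = (z:ℝ))
    (hne : (fracSet B).Nonempty) :
    ∃ B₁ : Fin N → Fin N → ℝ,
      fracSet B₁ ⊂ fracSet B ∧
      (∀ m n, ((⌊B m n⌋:ℝ) ≤ B₁ m n ∧ B₁ m n ≤ (⌈B m n⌉:ℝ))) ∧
      (∀ m, ∑ n, B₁ m n = ∑ n, B m n) ∧
      (∀ n, ∑ m, B₁ m n = ∑ m, B m n) := by
  classical
  obtain ⟨p₀, hp₀⟩ := hne
  have hp₀' : Int.fract (B p₀.1 p₀.2) ≠ 0 := by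
    simpa [fracSet] using hp₀
  -- every fractional entry has a partner in its column and in its row
  have hnc : ∀ m n, Int.fract (B m n) ≠ 0 → ∃ m', m' ≠ m ∧ Int.fract (B m' n) ≠ 0 := by
    intro m n h
    by_contra hc
    push_neg at hc
    obtain ⟨z, hz⟩ := hcol n
    exact h (sum_int_of_others (fun m' => B m' n) z hz m hc)
  have hnr : ∀ m n, Int.fract (B m n) ≠ 0 → ∃ n', n' ≠ n ∧ Int.fract (B m n') ≠ 0 := by
    intro m n h
    by_contra hc
    push_neg at hc
    obtain ⟨z, hz⟩ := hrow m
    exact h (sum_int_of_others (fun n' => B m n') z hz n hc)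
  -- build an infinite alternating walk of fractional entries
  have hseq : ∃ (a : ℕ → Fin N) (b : ℕ → Fin N),
      (∀ k, Int.fract (B (a k) (b k)) ≠ 0) ∧
      (∀ k, a (k+1) ≠ a k) ∧
      (∀ k, Int.fract (B (a (k+1)) (b k)) ≠ 0) ∧
      (∀ k, b (k+1) ≠ b k) := by
    choose cf hc1 hc2 using hnc
    choose rf hr1 hr2 using hnr
    let step : {p : Fin N × Fin N // Int.fract (B p.1 p.2) ≠ 0} →
        {p : Fin N × Fin N // Int.fract (B p.1 p.2) ≠ 0} :=
      fun q => ⟨(cf q.1.1 q.1.2 q.2, rf (cf q.1.1 q.1.2 q.2) q.1.2 (hc2 q.1.1 q.1.2 q.2)),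
        hr2 _ _ (hc2 q.1.1 q.1.2 q.2)⟩
    let f : ℕ → {p : Fin N × Fin N // Int.fract (B p.1 p.2) ≠ 0} :=
      fun k => step^[k] ⟨p₀, hp₀'⟩
    have hf : ∀ k, f (k+1) = step (f k) := fun k => Function.iterate_succ_apply' step k _
    refine ⟨fun k => (f k).1.1, fun k => (f k).1.2, fun k => (f k).2, ?_, ?_, ?_⟩
    · intro k
      show (f (k+1)).1.1 ≠ (f k).1.1
      rw [hf k]
      exact hc1 _ _ _
    · intro k
      show Int.fract (B (f (k+1)).1.1 (f k).1.2) ≠ 0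
      rw [hf k]
      exact hc2 _ _ _
    · intro k
      show (f (k+1)).1.2 ≠ (f k).1.2
      rw [hf k]
      exact hr1 _ _ _
  obtain ⟨a, b, hab, ha, habx, hb⟩ := hseq
  set v : ℕ → Fin N ⊕ Fin N :=
    fun s => if s % 2 = 0 then Sum.inl (a (s/2)) else Sum.inr (b (s/2)) with hv
  have hveven : ∀ s, s % 2 = 0 → v s = Sum.inl (a (s/2)) := by
    intro s h; simp only [hv]; rw [if_pos h]
  have hvodd : ∀ s, ¬ s % 2 = 0 → v s = Sum.inr (b (s/2)) := by
    intro s h; simp only [hv]; rw [if_neg h]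
  -- pigeonhole : the walk revisits a vertex
  have hpig : ∃ T, ∃ t, t < T ∧ v t = v T := by
    have hcard : Fintype.card (Fin N ⊕ Fin N) < Fintype.card (Fin (2*N+1)) := by
      simp [Fintype.card_sum]
      omega
    obtain ⟨x, y, hxy, hvxy⟩ :=
      Fintype.exists_ne_map_eq_of_card_lt (fun i : Fin (2*N+1) => v i) hcard
    rcases lt_or_gt_of_ne (show (x:ℕ) ≠ (y:ℕ) from fun h => hxy (Fin.ext h)) with h | h
    · exact ⟨y, x, h, hvxy⟩
    · exact ⟨x, y, h, hvxy.symm⟩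
  have hTspec := Nat.find_spec hpig
  have hTmin : ∀ T', T' < Nat.find hpig → ¬ ∃ t', t' < T' ∧ v t' = v T' :=
    fun T' h => Nat.find_min hpig h
  set T := Nat.find hpig with hTdef
  obtain ⟨t, htT, hvtT⟩ := hTspec
  have vinj : ∀ s s', s < s' → s' < T → v s ≠ v s' := by
    intro s s' h1 h2 he
    exact hTmin s' h2 ⟨s, h1, he⟩
  have hps : ∀ s s', s % 2 = 0 → ¬ s' % 2 = 0 → v s ≠ v s' := by
    intro s s' h1 h2 h
    rw [hveven s h1, hvodd s' h2] at h
    exact absurd h (by simp)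
  have htTpar : t % 2 = T % 2 := by
    rcases Nat.mod_two_eq_zero_or_one t with h1 | h1 <;>
      rcases Nat.mod_two_eq_zero_or_one T with h2 | h2 <;>
      first
        | omega
        | (exact absurd hvtT (hps t T (by omega) (by omega)))
        | (exact absurd hvtT.symm (hps T t (by omega) (by omega)))
  have hT2 : T ≠ t + 2 := by
    intro hEq
    rcases Nat.mod_two_eq_zero_or_one t with ht0 | ht0
    · have h1 : v t = Sum.inl (a (t/2)) := hveven t ht0
      have h2 : v (t+2) = Sum.inl (a (t/2+1)) := by
        rw [hveven (t+2) (by omega), show (t+2)/2 = t/2+1 from by omega]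
      rw [hEq, h2, h1] at hvtT
      exact ha (t/2) (Sum.inl.inj hvtT.symm)
    · have h1 : v t = Sum.inr (b (t/2)) := hvodd t (by omega)
      have h2 : v (t+2) = Sum.inr (b (t/2+1)) := by
        rw [hvodd (t+2) (by omega), show (t+2)/2 = t/2+1 from by omega]
      rw [hEq, h2, h1] at hvtT
      exact hb (t/2) (Sum.inr.inj hvtT.symm)
  have hT4 : t + 2 < T := by omega
  set r : ℕ → Fin N := fun s => a ((s+1)/2) with hr
  set c : ℕ → Fin N := fun s => b (s/2) with hc
  have hre : ∀ s, s % 2 = 0 → v s = Sum.inl (r s) ∧ v (s+1) = Sum.inr (c s) := by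
    intro s h
    constructor
    · rw [hveven s h, hr]
      simp only []
      rw [show (s+1)/2 = s/2 from by omega]
    · rw [hvodd (s+1) (by omega), hc]
      simp only []
      rw [show (s+1)/2 = s/2 from by omega]
  have hro : ∀ s, ¬ s % 2 = 0 → v (s+1) = Sum.inl (r s) ∧ v s = Sum.inr (c s) := by
    intro s h
    constructor
    · rw [hveven (s+1) (by omega), hr]
    · rw [hvodd s h, hc]
  have hfr : ∀ s, Int.fract (B (r s) (c s)) ≠ 0 := by
    intro s
    rcases Nat.mod_two_eq_zero_or_one s with h | h
    · rw [hr, hc]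
      simp only []
      rw [show (s+1)/2 = s/2 from by omega]
      exact hab (s/2)
    · rw [hr, hc]
      simp only []
      rw [show (s+1)/2 = s/2 + 1 from by omega]
      exact habx (s/2)
  -- distinctness of the cycle edges
  have hvt_eq : ∀ s, t ≤ s → s < T → v s = v t → s = t := by
    intro s h1 h2 h3
    rcases eq_or_lt_of_le h1 with h | h
    · omega
    · exact absurd h3.symm (vinj t s h h2)
  have hedge : ∀ s s', t ≤ s → s < s' → s' < T → ¬(r s = r s' ∧ c s = c s') := by
    intro s s' hts hss' hs'T ⟨hrr, hcc⟩
    rcases Nat.mod_two_eq_zero_or_one s with hp | hp <;>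
      rcases Nat.mod_two_eq_zero_or_one s' with hp' | hp'
    · -- both even : v s = inl (r s) = inl (r s') = v s'
      exact vinj s s' hss' hs'T (by rw [(hre s hp).1, (hre s' hp').1, hrr])
    · -- s even, s' odd
      have h1 : v s = v (s'+1) := by
        rw [(hre s hp).1, (hro s' (by omega)).1, hrr]
      rcases lt_or_eq_of_le (show s'+1 ≤ T from hs'T) with h2 | h2
      · exact vinj s (s'+1) (by omega) h2 h1
      · -- s' + 1 = T, so v s = v T = v t hence s = t
        have h3 : s = t := hvt_eq s hts (by omega) (by rw [h1, h2]; exact hvtT.symm)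
        have h4 : v (s+1) = v s' := by
          rw [(hre s hp).2, (hro s' (by omega)).2, hcc]
        have h5 : s + 1 < T := by omega
        have h6 : s + 1 = s' := by
          by_contra h7
          rcases Nat.lt_or_ge (s+1) s' with h8 | h8
          · exact vinj (s+1) s' h8 hs'T h4
          · have : s' < s + 1 := by omega
            exact vinj s' (s+1) this h5 h4.symm
        omega
    · -- s odd, s' even
      have h1 : v (s+1) = v s' := by
        rw [(hro s (by omega)).1, (hre s' hp').1, hrr]
      have h2 : s + 1 ≤ s' := by omega
      rcases lt_or_eq_of_le h2 with h3 | h3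
      · exact vinj (s+1) s' h3 hs'T h1
      · -- s' = s + 1 : consecutive; use the column equality
        have h4 : v s = v (s'+1) := by
          rw [(hro s (by omega)).2, (hre s' hp').2, hcc]
        rcases lt_or_eq_of_le (show s'+1 ≤ T from hs'T) with h5 | h5
        · exact vinj s (s'+1) (by omega) h5 h4
        · have h6 : s = t := hvt_eq s hts (by omega) (by rw [h4, h5]; exact hvtT.symm)
          omega
    · -- both odd : v s = inr (c s) = inr (c s') = v s'
      exact vinj s s' hss' hs'T (by rw [(hro s (by omega)).2, (hro s' (by omega)).2, hcc])
  -- the augmentation amount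
  have hIco : (Finset.Ico t T).Nonempty := ⟨t, by simp [htT]⟩
  set g : ℕ → ℝ :=
    fun s => if s % 2 = 0 then 1 - Int.fract (B (r s) (c s)) else Int.fract (B (r s) (c s))
    with hg
  have hgpos : ∀ s, 0 < g s := by
    intro s
    have h1 := Int.fract_nonneg (B (r s) (c s))
    have h2 := Int.fract_lt_one (B (r s) (c s))
    have h3 := hfr s
    rw [hg]
    simp only []
    split <;> [linarith; exact lt_of_le_of_ne h1 (Ne.symm h3)]
  set ε : ℝ := (Finset.Ico t T).inf' hIco g with hε
  have hεpos : 0 < ε := (Finset.lt_inf'_iff hIco).mpr fun s _ => hgpos s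
  have hεle : ∀ s ∈ Finset.Ico t T, ε ≤ g s := fun s hs => Finset.inf'_le _ hs
  obtain ⟨s₀, hs₀, hs₀e⟩ := Finset.exists_mem_eq_inf' hIco g
  set sg : ℕ → ℝ := fun s => if s % 2 = 0 then 1 else -1 with hsg
  set δ : Fin N → Fin N → ℝ :=
    fun m n => ∑ s ∈ Finset.Ico t T, (if r s = m ∧ c s = n then sg s else 0) with hδ
  set B₁ : Fin N → Fin N → ℝ := fun m n => B m n + ε * δ m n with hB₁
  have hδe : ∀ s ∈ Finset.Ico t T, δ (r s) (c s) = sg s := by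
    intro s hs
    rw [hδ]
    simp only []
    rw [Finset.sum_eq_single_of_mem s hs]
    · simp
    · intro s' hs' hne
      rw [if_neg]
      rintro ⟨h1, h2⟩
      simp only [Finset.mem_Ico] at hs hs'
      rcases Nat.lt_or_ge s' s with h3 | h3
      · exact hedge s' s hs'.1 (by omega) hs.2 ⟨h1, h2⟩
      · exact hedge s s' hs.1 (by omega) hs'.2 ⟨h1.symm, h2.symm⟩
  have hδcases : ∀ m n, δ m n = 0 ∨
      ∃ s ∈ Finset.Ico t T, r s = m ∧ c s = n ∧ δ m n = sg s := by
    intro m n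
    by_cases h : ∃ s ∈ Finset.Ico t T, r s = m ∧ c s = n
    · obtain ⟨s, hs, h1, h2⟩ := h
      right
      exact ⟨s, hs, h1, h2, by rw [← h1, ← h2]; exact hδe s hs⟩
    · left
      push_neg at h
      rw [hδ]
      simp only []
      refine Finset.sum_eq_zero fun s hs => ?_
      rw [if_neg]
      rintro ⟨h1, h2⟩
      exact (h s hs h1) h2
  obtain ⟨k, hk⟩ : ∃ k, T = t + 2*k := ⟨(T - t)/2, by omega⟩
  have hsge : ∀ s, s % 2 = 0 → sg s = 1 := by
    intro s h; rw [hsg]; simp only []; rw [if_pos h]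
  have hsgo : ∀ s, ¬ s % 2 = 0 → sg s = -1 := by
    intro s h; rw [hsg]; simp only []; rw [if_neg h]
  have hrow0 : ∀ m : Fin N, ∑ n, δ m n = 0 := by
    intro m
    have h1 : ∑ n, δ m n = ∑ s ∈ Finset.Ico t T, (if r s = m then sg s else 0) := by
      rw [hδ]
      simp only []
      rw [Finset.sum_comm]
      refine Finset.sum_congr rfl fun s _ => ?_
      by_cases hm : r s = m
      · simp [hm, Finset.sum_ite_eq]
      · simp [hm]
    rw [h1, hk, pair_sum]
    rcases Nat.mod_two_eq_zero_or_one t with hpt | hpt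
    · have h2 : ∀ j, (if r (t+2*j) = m then sg (t+2*j) else 0)
            + (if r (t+2*j+1) = m then sg (t+2*j+1) else 0)
          = (fun j => if v (t+2*j) = Sum.inl m then (1:ℝ) else 0) j
            - (fun j => if v (t+2*j) = Sum.inl m then (1:ℝ) else 0) (j+1) := by
        intro j
        simp only []
        have he : (t+2*j) % 2 = 0 := by omega
        have ho : ¬ (t+2*j+1) % 2 = 0 := by omega
        have e1 : v (t+2*j) = Sum.inl (r (t+2*j)) := (hre _ he).1
        have e2 : v (t+2*(j+1)) = Sum.inl (r (t+2*j+1)) := by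
          rw [show t+2*(j+1) = (t+2*j+1)+1 from by ring]
          exact (hro _ ho).1
        have c1 : (r (t+2*j) = m) ↔ (v (t+2*j) = Sum.inl m) := by rw [e1]; simp
        have c2 : (r (t+2*j+1) = m) ↔ (v (t+2*(j+1)) = Sum.inl m) := by rw [e2]; simp
        rw [hsge _ he, hsgo _ ho, if_congr c1 rfl rfl, if_congr c2 rfl rfl]
        by_cases hA : v (t+2*j) = Sum.inl m <;>
          by_cases hB : v (t+2*(j+1)) = Sum.inl m <;>
          simp [hA, hB]
      rw [Finset.sum_congr rfl fun j _ => h2 j,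
        Finset.sum_range_sub' (fun j => if v (t+2*j) = Sum.inl m then (1:ℝ) else 0) k]
      simp only [Nat.mul_zero, Nat.add_zero, ← hk, hvtT, sub_self]
    · have h2 : ∀ j, (if r (t+2*j) = m then sg (t+2*j) else 0)
            + (if r (t+2*j+1) = m then sg (t+2*j+1) else 0) = 0 := by
        intro j
        have ho : ¬ (t+2*j) % 2 = 0 := by omega
        have he : (t+2*j+1) % 2 = 0 := by omega
        have e1 : v (t+2*j+1) = Sum.inl (r (t+2*j)) := (hro _ ho).1
        have e2 : v (t+2*j+1) = Sum.inl (r (t+2*j+1)) := (hre _ he).1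
        have c1 : (r (t+2*j) = m) ↔ (v (t+2*j+1) = Sum.inl m) := by rw [e1]; simp
        have c2 : (r (t+2*j+1) = m) ↔ (v (t+2*j+1) = Sum.inl m) := by rw [e2]; simp
        rw [hsgo _ ho, hsge _ he, if_congr c1 rfl rfl, if_congr c2 rfl rfl]
        by_cases hA : v (t+2*j+1) = Sum.inl m <;> simp [hA]
      rw [Finset.sum_congr rfl fun j _ => h2 j]
      simp
  have hcol0 : ∀ n : Fin N, ∑ m, δ m n = 0 := by
    intro n
    have h1 : ∑ m, δ m n = ∑ s ∈ Finset.Ico t T, (if c s = n then sg s else 0) := by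
      rw [hδ]
      simp only []
      rw [Finset.sum_comm]
      refine Finset.sum_congr rfl fun s _ => ?_
      by_cases hn : c s = n
      · simp [hn, Finset.sum_ite_eq]
      · simp [hn]
    rw [h1, hk, pair_sum]
    rcases Nat.mod_two_eq_zero_or_one t with hpt | hpt
    · have h2 : ∀ j, (if c (t+2*j) = n then sg (t+2*j) else 0)
            + (if c (t+2*j+1) = n then sg (t+2*j+1) else 0) = 0 := by
        intro j
        have he : (t+2*j) % 2 = 0 := by omega
        have ho : ¬ (t+2*j+1) % 2 = 0 := by omega
        have e1 : v (t+2*j+1) = Sum.inr (c (t+2*j)) := (hre _ he).2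
        have e2 : v (t+2*j+1) = Sum.inr (c (t+2*j+1)) := (hro _ ho).2
        have c1 : (c (t+2*j) = n) ↔ (v (t+2*j+1) = Sum.inr n) := by rw [e1]; simp
        have c2 : (c (t+2*j+1) = n) ↔ (v (t+2*j+1) = Sum.inr n) := by rw [e2]; simp
        rw [hsge _ he, hsgo _ ho, if_congr c1 rfl rfl, if_congr c2 rfl rfl]
        by_cases hA : v (t+2*j+1) = Sum.inr n <;> simp [hA]
      rw [Finset.sum_congr rfl fun j _ => h2 j]
      simp
    · have h2 : ∀ j, (if c (t+2*j) = n then sg (t+2*j) else 0)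
            + (if c (t+2*j+1) = n then sg (t+2*j+1) else 0)
          = (fun j => if v (t+2*j) = Sum.inr n then (1:ℝ) else 0) (j+1)
            - (fun j => if v (t+2*j) = Sum.inr n then (1:ℝ) else 0) j := by
        intro j
        simp only []
        have ho : ¬ (t+2*j) % 2 = 0 := by omega
        have he : (t+2*j+1) % 2 = 0 := by omega
        have e1 : v (t+2*j) = Sum.inr (c (t+2*j)) := (hro _ ho).2
        have e2 : v (t+2*(j+1)) = Sum.inr (c (t+2*j+1)) := by
          rw [show t+2*(j+1) = (t+2*j+1)+1 from by ring]
          exact (hre _ he).2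
        have c1 : (c (t+2*j) = n) ↔ (v (t+2*j) = Sum.inr n) := by rw [e1]; simp
        have c2 : (c (t+2*j+1) = n) ↔ (v (t+2*(j+1)) = Sum.inr n) := by rw [e2]; simp
        rw [hsgo _ ho, hsge _ he, if_congr c1 rfl rfl, if_congr c2 rfl rfl]
        by_cases hA : v (t+2*j) = Sum.inr n <;>
          by_cases hB : v (t+2*(j+1)) = Sum.inr n <;>
          simp [hA, hB]
      rw [Finset.sum_congr rfl fun j _ => h2 j,
        Finset.sum_range_sub (fun j => if v (t+2*j) = Sum.inr n then (1:ℝ) else 0) k]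
      simp only [Nat.mul_zero, Nat.add_zero, ← hk, hvtT, sub_self]
  have hfloor : ∀ m n, Int.fract (B m n) + (⌊B m n⌋:ℝ) = B m n := fun m n => Int.fract_add_floor _
  have hεs₀ : ε = g s₀ := by rw [hε]; exact hs₀e
  have hbd : ∀ m n, ((⌊B m n⌋:ℝ) ≤ B₁ m n ∧ B₁ m n ≤ (⌈B m n⌉:ℝ)) := by
    intro m n
    rcases hδcases m n with h | ⟨s, hs, h1, h2, h3⟩
    · rw [hB₁]
      simp only []
      rw [h, mul_zero, add_zero]
      exact ⟨Int.floor_le _, Int.le_ceil _⟩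
    · have hfrmn : Int.fract (B m n) ≠ 0 := by rw [← h1, ← h2]; exact hfr s
      have hfrpos : 0 < Int.fract (B m n) :=
        lt_of_le_of_ne (Int.fract_nonneg _) (Ne.symm hfrmn)
      have hfrlt := Int.fract_lt_one (B m n)
      have hceil : (⌊B m n⌋:ℝ) + 1 ≤ (⌈B m n⌉:ℝ) := by
        have hlt : (⌊B m n⌋:ℝ) < B m n := by linarith [hfloor m n]
        have h5 : ⌊B m n⌋ + 1 ≤ ⌈B m n⌉ := Int.lt_ceil.mpr hlt
        exact_mod_cast h5
      have hg1 := hεle s hs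
      rw [hB₁]
      simp only []
      rw [h3]
      rcases Nat.mod_two_eq_zero_or_one s with hp | hp
      · rw [hsge _ hp, mul_one]
        have hgs : g s = 1 - Int.fract (B m n) := by
          rw [hg]; simp only []; rw [if_pos hp, h1, h2]
        rw [hgs] at hg1
        constructor
        · linarith [Int.floor_le (B m n)]
        · linarith [hfloor m n]
      · rw [hsgo _ (by omega), mul_neg_one]
        have hgs : g s = Int.fract (B m n) := by
          rw [hg]; simp only []; rw [if_neg (by omega), h1, h2]
        rw [hgs] at hg1
        constructor
        · linarith [hfloor m n]
        · linarith [Int.le_ceil (B m n)]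
  have hrs : ∀ m, ∑ n, B₁ m n = ∑ n, B m n := by
    intro m
    rw [hB₁]
    simp only []
    rw [Finset.sum_add_distrib, ← Finset.mul_sum, hrow0 m, mul_zero, add_zero]
  have hcs : ∀ n, ∑ m, B₁ m n = ∑ m, B m n := by
    intro n
    rw [hB₁]
    simp only []
    rw [Finset.sum_add_distrib, ← Finset.mul_sum, hcol0 n, mul_zero, add_zero]
  have hsub : fracSet B₁ ⊆ fracSet B := by
    intro p hp
    simp only [fracSet, Finset.mem_filter, Finset.mem_univ, true_and] at hp ⊢
    by_contra h0
    apply hp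
    have hδ0 : δ p.1 p.2 = 0 := by
      rcases hδcases p.1 p.2 with h | ⟨s, hs, h1, h2, h3⟩
      · exact h
      · exact absurd h0 (by rw [← h1, ← h2]; exact hfr s)
    rw [hB₁]
    simp only []
    rw [hδ0, mul_zero, add_zero, h0]
  have hmem0 : Int.fract (B₁ (r s₀) (c s₀)) = 0 := by
    rcases Nat.mod_two_eq_zero_or_one s₀ with hp | hp
    · have hval : B₁ (r s₀) (c s₀) = ((⌊B (r s₀) (c s₀)⌋ + 1 : ℤ):ℝ) := by
        rw [hB₁]
        simp only []
        rw [hδe s₀ hs₀, hsge _ hp, mul_one, hεs₀]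
        rw [hg]
        simp only []
        rw [if_pos hp]
        push_cast
        linarith [hfloor (r s₀) (c s₀)]
      rw [hval, Int.fract_intCast]
    · have hval : B₁ (r s₀) (c s₀) = ((⌊B (r s₀) (c s₀)⌋ : ℤ):ℝ) := by
        rw [hB₁]
        simp only []
        rw [hδe s₀ hs₀, hsgo _ (by omega), mul_neg_one, hεs₀]
        rw [hg]
        simp only []
        rw [if_neg (by omega)]
        linarith [hfloor (r s₀) (c s₀)]
      rw [hval, Int.fract_intCast]
  have hss : fracSet B₁ ⊂ fracSet B := by
    refine (Finset.ssubset_iff_of_subset hsub).mpr ⟨(r s₀, c s₀), ?_, ?_⟩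
    · simp only [fracSet, Finset.mem_filter, Finset.mem_univ, true_and]
      exact hfr s₀
    · simp only [fracSet, Finset.mem_filter, Finset.mem_univ, true_and, not_not]
      exact hmem0
  exact ⟨B₁, hss, hbd, hrs, hcs⟩

lemma matrix_round {N : ℕ} (B : Fin N → Fin N → ℝ)
    (hrow : ∀ m, ∃ z : ℤ, ∑ n, B m n = (z:ℝ))
    (hcol : ∀ n, ∃ z : ℤ, ∑ m, B m n = (z:ℝ)) :
    ∃ C : Fin N → Fin N → ℤ,
      (∀ m n, ⌊B m n⌋ ≤ C m n ∧ C m n ≤ ⌈B m n⌉) ∧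
      (∀ m, ((∑ n, C m n : ℤ) : ℝ) = ∑ n, B m n) ∧
      (∀ n, ((∑ m, C m n : ℤ) : ℝ) = ∑ m, B m n) := by
  suffices main : ∀ (k : ℕ) (B : Fin N → Fin N → ℝ), (fracSet B).card = k →
      (∀ m, ∃ z : ℤ, ∑ n, B m n = (z:ℝ)) → (∀ n, ∃ z : ℤ, ∑ m, B m n = (z:ℝ)) →
      ∃ C : Fin N → Fin N → ℤ,
        (∀ m n, ⌊B m n⌋ ≤ C m n ∧ C m n ≤ ⌈B m n⌉) ∧
        (∀ m, ((∑ n, C m n : ℤ) : ℝ) = ∑ n, B m n) ∧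
        (∀ n, ((∑ m, C m n : ℤ) : ℝ) = ∑ m, B m n) by
    exact main _ B rfl hrow hcol
  intro k
  induction k using Nat.strong_induction_on with
  | _ k IH =>
    intro B hcard hrow hcol
    rcases Finset.eq_empty_or_nonempty (fracSet B) with hF | hF
    · -- all entries integral
      refine ⟨fun m n => ⌊B m n⌋, ?_, ?_, ?_⟩
      · exact fun m n => ⟨le_refl _, Int.floor_le_ceil _⟩
      · intro m
        push_cast
        refine Finset.sum_congr rfl fun n _ => ?_
        have : Int.fract (B m n) = 0 := by
          by_contra h
          have : (m, n) ∈ fracSet B := by simp [fracSet, h]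
          simp [hF] at this
        have h3 := Int.fract_add_floor (B m n)
        rw [this] at h3; linarith
      · intro n
        push_cast
        refine Finset.sum_congr rfl fun m _ => ?_
        have : Int.fract (B m n) = 0 := by
          by_contra h
          have : (m, n) ∈ fracSet B := by simp [fracSet, h]
          simp [hF] at this
        have h3 := Int.fract_add_floor (B m n)
        rw [this] at h3; linarith
    · obtain ⟨B₁, hsub, hbd, hrs, hcs⟩ := round_step B hrow hcol hF
      obtain ⟨C, hCbd, hCr, hCc⟩ := IH (fracSet B₁).card
        (hcard ▸ Finset.card_lt_card hsub) B₁ rfl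
        (fun m => (hrow m).imp fun z hz => (hrs m).trans hz)
        (fun n => (hcol n).imp fun z hz => (hcs n).trans hz)
      refine ⟨C, fun m n => ⟨?_, ?_⟩, fun m => (hCr m).trans (hrs m),
        fun n => (hCc n).trans (hcs n)⟩
      · exact le_trans (Int.le_floor.mpr (hbd m n).1) (hCbd m n).1
      · exact le_trans (hCbd m n).2 (Int.ceil_le.mpr (hbd m n).2)

theorem stmt9 (M : ℕ) (u' : Fin M → Fin M → ℝ) (S : Fin M → ℝ)
    (w : Fin M → ℝ) (κ : ℝ) (K : ℤ)
    (hnn_u : ∀ m n, 0 ≤ u' m n) (hnn_S : ∀ n, 0 ≤ S n)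
    (hnn_w : ∀ m, 0 ≤ w m * κ)
    (hleft : ∀ m, ∑ n, u' m n = w m * κ)
    (hright : ∀ n, ∑ m, u' m n = S n)
    (hsum : ∑ n, S n = (K : ℝ)) :
    ∃ (ustar : Fin M → Fin M → ℤ) (Sstar : Fin M → ℤ) (dstar : Fin M → ℤ),
      (∀ m n, 0 ≤ ustar m n) ∧ (∀ n, 0 ≤ Sstar n) ∧ (∀ m, 0 ≤ dstar m) ∧
      (∀ m n, ⌊u' m n⌋ ≤ ustar m n ∧ ustar m n ≤ ⌈u' m n⌉) ∧
      (∀ n, ⌊S n⌋ ≤ Sstar n ∧ Sstar n ≤ ⌈S n⌉) ∧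
      (∀ m, ⌊w m * κ⌋ ≤ dstar m ∧ dstar m ≤ ⌈w m * κ⌉) ∧
      (∀ m, ∑ n, ustar m n = dstar m) ∧
      (∀ n, ∑ m, ustar m n = Sstar n) ∧
      (∑ n, Sstar n = K) := by
  classical
  set L : Fin (M+1) := Fin.last M with hL
  set B : Fin (M+1) → Fin (M+1) → ℝ := fun i j =>
    if hi : (i:ℕ) < M then
      (if hj : (j:ℕ) < M then u' ⟨i, hi⟩ ⟨j, hj⟩ else (⌈w ⟨i, hi⟩ * κ⌉ : ℝ) - w ⟨i, hi⟩ * κ)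
    else
      (if hj : (j:ℕ) < M then (⌈S ⟨j, hj⟩⌉ : ℝ) - S ⟨j, hj⟩ else 0) with hB
  have hB1 : ∀ (m n : Fin M), B m.castSucc n.castSucc = u' m n := by
    intro m n
    rw [hB]
    simp only []
    rw [dif_pos (show ((m.castSucc:ℕ) < M) from m.isLt),
      dif_pos (show ((n.castSucc:ℕ) < M) from n.isLt)]
    simp
  have hB2 : ∀ (m : Fin M), B m.castSucc L = (⌈w m * κ⌉:ℝ) - w m * κ := by
    intro m
    rw [hB]
    simp only []
    rw [dif_pos (show ((m.castSucc:ℕ) < M) from m.isLt),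
      dif_neg (show ¬((L:ℕ) < M) from by simp [hL])]
    simp
  have hB3 : ∀ (n : Fin M), B L n.castSucc = (⌈S n⌉:ℝ) - S n := by
    intro n
    rw [hB]
    simp only []
    rw [dif_neg (show ¬((L:ℕ) < M) from by simp [hL]),
      dif_pos (show ((n.castSucc:ℕ) < M) from n.isLt)]
    simp
  have hB4 : B L L = 0 := by
    rw [hB]
    simp only []
    rw [dif_neg (show ¬((L:ℕ) < M) from by simp [hL]),
      dif_neg (show ¬((L:ℕ) < M) from by simp [hL])]
  have hwK : ∑ m, w m * κ = (K:ℝ) := by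
    calc ∑ m, w m * κ = ∑ m, ∑ n, u' m n :=
          Finset.sum_congr rfl fun m _ => (hleft m).symm
      _ = ∑ n, ∑ m, u' m n := Finset.sum_comm
      _ = ∑ n, S n := Finset.sum_congr rfl fun n _ => hright n
      _ = (K:ℝ) := hsum
  have hrow1 : ∀ m : Fin M, ∑ j, B m.castSucc j = ((⌈w m * κ⌉:ℤ):ℝ) := by
    intro m
    rw [Fin.sum_univ_castSucc, hB2 m, Finset.sum_congr rfl fun n _ => hB1 m n, hleft m]
    ring
  have hrow2 : ∑ j, B L j = (((∑ n, ⌈S n⌉) - K : ℤ):ℝ) := by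
    rw [Fin.sum_univ_castSucc, hB4, Finset.sum_congr rfl fun n _ => hB3 n,
      Finset.sum_sub_distrib, hsum]
    push_cast
    ring
  have hcol1 : ∀ n : Fin M, ∑ i, B i n.castSucc = ((⌈S n⌉:ℤ):ℝ) := by
    intro n
    rw [Fin.sum_univ_castSucc, hB3 n, Finset.sum_congr rfl fun m _ => hB1 m n, hright n]
    ring
  have hcol2 : ∑ i, B i L = (((∑ m, ⌈w m * κ⌉) - K : ℤ):ℝ) := by
    rw [Fin.sum_univ_castSucc, hB4, Finset.sum_congr rfl fun m _ => hB2 m,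
      Finset.sum_sub_distrib, hwK]
    push_cast
    ring
  obtain ⟨C, hCbd, hCr, hCc⟩ := matrix_round B
    (fun i => Fin.lastCases ⟨_, hrow2⟩ (fun m => ⟨_, hrow1 m⟩) i)
    (fun j => Fin.lastCases ⟨_, hcol2⟩ (fun n => ⟨_, hcol1 n⟩) j)
  have hCr1 : ∀ m : Fin M, ∑ j, C m.castSucc j = ⌈w m * κ⌉ := by
    intro m
    have h := (hCr m.castSucc).trans (hrow1 m)
    exact_mod_cast h
  have hCr2 : ∑ j, C L j = (∑ n, ⌈S n⌉) - K := by
    have h := (hCr L).trans hrow2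
    exact_mod_cast h
  have hCc1 : ∀ n : Fin M, ∑ i, C i n.castSucc = ⌈S n⌉ := by
    intro n
    have h := (hCc n.castSucc).trans (hcol1 n)
    exact_mod_cast h
  have hCLL : C L L = 0 := by
    obtain ⟨hA, hBd⟩ := hCbd L L
    rw [hB4] at hA hBd
    simp at hA hBd
    omega
  have hfc : ∀ x : ℝ, ⌊(⌈x⌉:ℝ) - x⌋ = 0 ∧ ⌈(⌈x⌉:ℝ) - x⌉ = ⌈x⌉ - ⌊x⌋ := by
    intro x
    constructor
    · rw [show (⌈x⌉:ℝ) - x = -x + ⌈x⌉ from by ring, Int.floor_add_intCast, Int.floor_neg]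
      omega
    · rw [show (⌈x⌉:ℝ) - x = -x + ⌈x⌉ from by ring, Int.ceil_add_intCast, Int.ceil_neg]
      omega
  have hdb : ∀ m : Fin M, 0 ≤ C m.castSucc L ∧ C m.castSucc L ≤ ⌈w m * κ⌉ - ⌊w m * κ⌋ := by
    intro m
    obtain ⟨hA, hBd⟩ := hCbd m.castSucc L
    rw [hB2 m] at hA hBd
    obtain ⟨e1, e2⟩ := hfc (w m * κ)
    rw [e1] at hA
    rw [e2] at hBd
    exact ⟨hA, hBd⟩
  have hSb : ∀ n : Fin M, 0 ≤ C L n.castSucc ∧ C L n.castSucc ≤ ⌈S n⌉ - ⌊S n⌋ := by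
    intro n
    obtain ⟨hA, hBd⟩ := hCbd L n.castSucc
    rw [hB3 n] at hA hBd
    obtain ⟨e1, e2⟩ := hfc (S n)
    rw [e1] at hA
    rw [e2] at hBd
    exact ⟨hA, hBd⟩
  refine ⟨fun m n => C m.castSucc n.castSucc,
    fun n => ⌈S n⌉ - C L n.castSucc,
    fun m => ⌈w m * κ⌉ - C m.castSucc L, ?_, ?_, ?_, ?_, ?_, ?_, ?_, ?_, ?_⟩
  · intro m n
    have h := (hCbd m.castSucc n.castSucc).1
    rw [hB1 m n] at h
    exact le_trans (Int.floor_nonneg.mpr (hnn_u m n)) h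
  · intro n
    have h := (hSb n).2
    have h2 : 0 ≤ ⌊S n⌋ := Int.floor_nonneg.mpr (hnn_S n)
    simp only []
    omega
  · intro m
    have h := (hdb m).2
    have h2 : 0 ≤ ⌊w m * κ⌋ := Int.floor_nonneg.mpr (hnn_w m)
    simp only []
    omega
  · intro m n
    have h := hCbd m.castSucc n.castSucc
    rw [hB1 m n] at h
    exact h
  · intro n
    have h := hSb n
    simp only []
    omega
  · intro m
    have h := hdb m
    simp only []
    omega
  · intro m
    have h := hCr1 m
    rw [Fin.sum_univ_castSucc, ← hL] at h
    simp only []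
    omega
  · intro n
    have h := hCc1 n
    rw [Fin.sum_univ_castSucc, ← hL] at h
    simp only []
    omega
  · simp only []
    rw [Finset.sum_sub_distrib]
    have h := hCr2
    rw [Fin.sum_univ_castSucc, ← hL, hCLL] at h
    omega
end
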